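/- Consider x : [0, t_f] → ℝⁿ differentiable with ẋ(t) = f(x(t)) + g(x(t)) u(t) and x(0) = x₀, where f : ℝⁿ → ℝⁿ and g : ℝⁿ → ℝ^{n×m} are Lipschitz continuous and u : [0, t_f] → ℝ^m is measurable with ‖u(t)‖_∞ ≤ 1 for all t. Set B := g(x₀), assume B Bᵀ is invertible with B† = Bᵀ(B Bᵀ)⁻¹, let x̃ := x₀ − x_tg, ū := (1/t_f)∫₀^{t_f} u(t) dt, and v := −∫₀^{t_f} f(x(t)) dt − ∫₀^{t_f} (g(x(t)) − g(x₀)) u(t) dt. If x(t_f) = x_tg, then ∫₀^{t_f} ‖u(t)‖₂² dt ≥ (1/t_f)‖B†(v − x̃)‖₂². -/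

import Mathlib

open Matrix MeasureTheory

/-- Moore–Penrose pseudoinverse of a full-row-rank matrix: `A† = Aᵀ (A Aᵀ)⁻¹`. -/
noncomputable def pinv {n m : ℕ} (A : Matrix (Fin n) (Fin m) ℝ) : Matrix (Fin m) (Fin n) ℝ :=
  Aᵀ * (A * Aᵀ)⁻¹

/-- `∞`-norm of a vector: maximum absolute entry. -/
noncomputable def normInf {k : ℕ} (x : Fin k → ℝ) : ℝ := ⨆ i, |x i|

/-- Induced `∞`-norm of a matrix: maximum absolute row sum. -/
noncomputable def matNormInf {a b : ℕ} (A : Matrix (Fin a) (Fin b) ℝ) : ℝ :=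
  ⨆ i, ∑ j, |A i j|

lemma normInf_eq_norm {k : ℕ} (x : Fin k → ℝ) : normInf x = ‖x‖ := by
  rw [normInf, Pi.norm_def, Finset.sup_univ_eq_ciSup, NNReal.coe_iSup]
  simp [Real.norm_eq_abs]

lemma cont_of_lip {n : ℕ} {E : Type*} [SeminormedAddCommGroup E]
    {F : (Fin n → ℝ) → E} {L : ℝ}
    (h : ∀ x1 x2, ‖F x1 - F x2‖ ≤ L * ‖x1 - x2‖) : Continuous F := by
  have : LipschitzWith (max L 0).toNNReal F := by
    apply LipschitzWith.of_dist_le_mul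
    intro a b
    rw [dist_eq_norm, dist_eq_norm]
    calc ‖F a - F b‖ ≤ L * ‖a - b‖ := h a b
      _ ≤ max L 0 * ‖a - b‖ :=
        mul_le_mul_of_nonneg_right (le_max_left _ _) (norm_nonneg _)
      _ = ((max L 0).toNNReal : ℝ) * ‖a - b‖ := by
        rw [Real.coe_toNNReal _ (le_max_right _ _)]
  exact this.continuous

lemma intervalIntegrable_of_bound {E : Type*} [NormedAddCommGroup E] {tf : ℝ} (htf : 0 ≤ tf)
    (F : ℝ → E) (hm : AEStronglyMeasurable F (volume.restrict (Set.Ioc 0 tf))) (C : ℝ)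
    (hbd : ∀ t ∈ Set.Ioc (0:ℝ) tf, ‖F t‖ ≤ C) :
    IntervalIntegrable F volume 0 tf := by
  rw [intervalIntegrable_iff, Set.uIoc_of_le htf]
  have hc : IntegrableOn (fun _ : ℝ => C) (Set.Ioc 0 tf) volume :=
    integrableOn_const measure_Ioc_lt_top.ne
  refine Integrable.mono' hc hm ?_
  rw [ae_restrict_iff' measurableSet_Ioc]
  exact Filter.Eventually.of_forall hbd

/-- Cauchy–Schwarz for interval integrals: `(∫ h)² ≤ t_f ∫ h²`. -/
lemma sq_integral_le {tf : ℝ} (htf : 0 < tf) (h : ℝ → ℝ)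
    (h1 : IntervalIntegrable h volume 0 tf)
    (h2 : IntervalIntegrable (fun t => h t ^ 2) volume 0 tf) :
    (∫ t in (0:ℝ)..tf, h t) ^ 2 ≤ tf * ∫ t in (0:ℝ)..tf, h t ^ 2 := by
  set A := ∫ t in (0:ℝ)..tf, h t with hA
  set c := A / tf with hc
  have hnn : 0 ≤ ∫ t in (0:ℝ)..tf, (h t - c) ^ 2 :=
    intervalIntegral.integral_nonneg htf.le (fun t _ => sq_nonneg _)
  have hexp : ∫ t in (0:ℝ)..tf, (h t - c) ^ 2
      = (∫ t in (0:ℝ)..tf, h t ^ 2) - 2 * c * A + c ^ 2 * tf := by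
    have heq : ∀ t, (h t - c) ^ 2 = h t ^ 2 - (2 * c) * h t + c ^ 2 := by intro t; ring
    simp_rw [heq]
    rw [intervalIntegral.integral_add ((h2.sub (h1.const_mul (2 * c))))
      intervalIntegrable_const,
      intervalIntegral.integral_sub h2 (h1.const_mul (2 * c)),
      intervalIntegral.integral_const_mul, intervalIntegral.integral_const]
    simp [← hA, smul_eq_mul]
    ring
  rw [hexp] at hnn
  have hc' : c * tf = A := by rw [hc]; exact div_mul_cancel₀ A htf.ne'
  nlinarith [hnn, htf, sq_nonneg c]

/-- `P = B†B` is an orthogonal projection, so it contracts the Euclidean norm. -/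
lemma proj_contract {n m : ℕ} (B : Matrix (Fin n) (Fin m) ℝ) (hB : IsUnit (B * Bᵀ).det)
    (w : Fin m → ℝ) :
    ∑ i, (((pinv B * B) *ᵥ w) i) ^ 2 ≤ ∑ i, (w i) ^ 2 := by
  set P : Matrix (Fin m) (Fin m) ℝ := pinv B * B with hP
  have hSymm : Pᵀ = P := by
    simp [hP, pinv, transpose_mul, transpose_nonsing_inv, Matrix.mul_assoc]
  have hIdem : P * P = P := by
    rw [hP, pinv]
    calc Bᵀ * (B * Bᵀ)⁻¹ * B * (Bᵀ * (B * Bᵀ)⁻¹ * B)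
        = Bᵀ * (B * Bᵀ)⁻¹ * (B * Bᵀ) * ((B * Bᵀ)⁻¹ * B) := by
          simp only [Matrix.mul_assoc]
      _ = Bᵀ * ((B * Bᵀ)⁻¹ * (B * Bᵀ)) * ((B * Bᵀ)⁻¹ * B) := by
          simp only [Matrix.mul_assoc]
      _ = Bᵀ * ((B * Bᵀ)⁻¹ * B) := by rw [Matrix.nonsing_inv_mul _ hB, Matrix.mul_one]
      _ = Bᵀ * (B * Bᵀ)⁻¹ * B := by rw [Matrix.mul_assoc]
  have hdot : ∑ i, ((P *ᵥ w) i) ^ 2 = ∑ i, w i * (P *ᵥ w) i := by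
    have h1 : ∑ i, ((P *ᵥ w) i) ^ 2 = (P *ᵥ w) ⬝ᵥ (P *ᵥ w) := by
      simp [dotProduct, sq]
    have hvm : (P *ᵥ w) ᵥ* P = P *ᵥ (P *ᵥ w) := by
      rw [← Matrix.mulVec_transpose, hSymm]
    have h2 : (P *ᵥ w) ⬝ᵥ (P *ᵥ w) = (P *ᵥ w) ⬝ᵥ w := by
      rw [Matrix.dotProduct_mulVec, hvm, Matrix.mulVec_mulVec, hIdem]
    rw [h1, h2, dotProduct_comm]; simp [dotProduct]
  have hcs := Finset.sum_mul_sq_le_sq_mul_sq Finset.univ w (fun i => (P *ᵥ w) i)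
  have hs : (0:ℝ) ≤ ∑ i, ((P *ᵥ w) i) ^ 2 := Finset.sum_nonneg fun i _ => sq_nonneg _
  have ht : (0:ℝ) ≤ ∑ i, (w i) ^ 2 := Finset.sum_nonneg fun i _ => sq_nonneg _
  nlinarith [hcs, hdot, hs, ht]

lemma abs_le_normInf {k : ℕ} (x : Fin k → ℝ) (i : Fin k) : |x i| ≤ normInf x := by
  rw [normInf_eq_norm, ← Real.norm_eq_abs]
  exact norm_le_pi_norm x i

/-- Any admissible control of the nonlinear system `ẋ = f(x) + g(x)u` achieving
`x(t_f) = x_tg` has energy at least `(1/t_f)‖B†(v − x̃)‖₂²` (the approximation used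
for the nominal energy). -/
theorem nominal_energy_lower_bound_nonlinear {n m : ℕ} (tf : ℝ) (htf : 0 < tf)
    (f : (Fin n → ℝ) → Fin n → ℝ) (g : (Fin n → ℝ) → Matrix (Fin n) (Fin m) ℝ)
    (hf : ∃ Lf : ℝ, ∀ x1 x2 : Fin n → ℝ, normInf (f x1 - f x2) ≤ Lf * normInf (x1 - x2))
    (hg : ∃ Lg : ℝ, ∀ x1 x2 : Fin n → ℝ, matNormInf (g x1 - g x2) ≤ Lg * normInf (x1 - x2))
    (u : ℝ → Fin m → ℝ) (hu : Measurable u) (hub : ∀ t, normInf (u t) ≤ 1)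
    (x : ℝ → Fin n → ℝ) (x0 xtg : Fin n → ℝ) (hx0 : x 0 = x0)
    (hx : ∀ t ∈ Set.Icc (0 : ℝ) tf, HasDerivAt x (f (x t) + g (x t) *ᵥ u t) t)
    (hB : IsUnit ((g x0) * (g x0)ᵀ).det)
    (v : Fin n → ℝ)
    (hv : v = -(∫ t in (0:ℝ)..tf, f (x t)) - ∫ t in (0:ℝ)..tf, (g (x t) - g x0) *ᵥ u t)
    (hreach : x tf = xtg) :
    (∫ t in (0:ℝ)..tf, ∑ i, (u t i) ^ 2) ≥
      (1 / tf) * ∑ i, ((pinv (g x0) *ᵥ (v - (x0 - xtg))) i) ^ 2 := by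
  obtain ⟨Lf, hLf⟩ := hf
  obtain ⟨Lg, hLg⟩ := hg
  have hfc : Continuous f := by
    apply cont_of_lip (L := Lf)
    intro x1 x2
    have h := hLf x1 x2
    rwa [normInf_eq_norm, normInf_eq_norm] at h
  have hrowle : ∀ (x1 x2 : Fin n → ℝ) (i : Fin n),
      ∑ j, |g x1 i j - g x2 i j| ≤ Lg * ‖x1 - x2‖ := by
    intro x1 x2 i
    have h1 : ∑ j, |(g x1 - g x2) i j| ≤ matNormInf (g x1 - g x2) := by
      rw [matNormInf]
      exact le_ciSup (f := fun i => ∑ j, |(g x1 - g x2) i j|)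
        (Set.Finite.bddAbove (Set.finite_range _)) i
    have h2 := hLg x1 x2
    rw [normInf_eq_norm] at h2
    simpa [Matrix.sub_apply] using h1.trans h2
  set g' : (Fin n → ℝ) → (Fin n → Fin m → ℝ) := fun y i j => g y i j with hg'def
  have hgc : Continuous g' := by
    apply cont_of_lip (L := max Lg 0)
    intro x1 x2
    rw [pi_norm_le_iff_of_nonneg (mul_nonneg (le_max_right _ _) (norm_nonneg _))]
    intro i
    rw [pi_norm_le_iff_of_nonneg (mul_nonneg (le_max_right _ _) (norm_nonneg _))]
    intro j
    have h1 : |g x1 i j - g x2 i j| ≤ ∑ j', |g x1 i j' - g x2 i j'| :=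
      Finset.single_le_sum (f := fun j' => |g x1 i j' - g x2 i j'|)
        (fun _ _ => abs_nonneg _) (Finset.mem_univ j)
    have h3 := (h1.trans (hrowle x1 x2 i)).trans
      (mul_le_mul_of_nonneg_right (le_max_left Lg 0) (norm_nonneg (x1 - x2)))
    simpa [Real.norm_eq_abs] using h3
  have hxc : ContinuousOn x (Set.Icc 0 tf) :=
    fun t ht => (hx t ht).continuousAt.continuousWithinAt
  have h0mem : (0:ℝ) ∈ Set.Icc (0:ℝ) tf := Set.mem_Icc.2 ⟨le_refl _, htf.le⟩
  set G : ℝ → ℝ := fun t => ∑ i, ∑ j, |g (x t) i j| with hGdef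
  have hGc : ContinuousOn G (Set.Icc 0 tf) := by
    apply continuousOn_finset_sum; intro i _
    apply continuousOn_finset_sum; intro j _
    exact (((continuous_apply j).comp
      ((continuous_apply i).comp hgc)).comp_continuousOn hxc).abs
  obtain ⟨C, hC⟩ := isCompact_Icc.exists_bound_of_continuousOn hGc
  have hGnn : ∀ t, 0 ≤ G t :=
    fun t => Finset.sum_nonneg fun i _ => Finset.sum_nonneg fun j _ => abs_nonneg _
  have hGleC : ∀ t ∈ Set.Icc (0:ℝ) tf, G t ≤ C := by
    intro t ht
    have := hC t ht
    rw [Real.norm_eq_abs] at this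
    exact (le_abs_self _).trans this
  have hentry : ∀ t ∈ Set.Icc (0:ℝ) tf, ∀ i, ∑ j, |g (x t) i j| ≤ C := by
    intro t ht i
    have h1 : ∑ j, |g (x t) i j| ≤ G t :=
      Finset.single_le_sum (f := fun i => ∑ j, |g (x t) i j|)
        (fun _ _ => Finset.sum_nonneg fun _ _ => abs_nonneg _) (Finset.mem_univ i)
    exact h1.trans (hGleC t ht)
  have hC0 : 0 ≤ C := (hGnn 0).trans (hGleC 0 h0mem)
  have hub' : ∀ t j, |u t j| ≤ 1 := fun t j => (abs_le_normInf (u t) j).trans (hub t)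
  have husm : AEStronglyMeasurable u (volume.restrict (Set.Ioc 0 tf)) :=
    hu.aestronglyMeasurable.restrict
  have hgxm : AEStronglyMeasurable (fun t => g' (x t))
      (volume.restrict (Set.Ioc 0 tf)) :=
    ((hgc.comp_continuousOn hxc).mono Set.Ioc_subset_Icc_self).aestronglyMeasurable
      measurableSet_Ioc
  have hφ : Continuous (fun p : (Fin n → Fin m → ℝ) × (Fin m → ℝ) =>
      (fun i => ∑ j, p.1 i j * p.2 j : Fin n → ℝ)) := by
    apply continuous_pi; intro i
    apply continuous_finset_sum; intro j _
    exact ((continuous_apply j).comp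
      ((continuous_apply i).comp continuous_fst)).mul ((continuous_apply j).comp continuous_snd)
  have hFm : AEStronglyMeasurable (fun t => g (x t) *ᵥ u t)
      (volume.restrict (Set.Ioc 0 tf)) := by
    have h := hφ.comp_aestronglyMeasurable (hgxm.prodMk husm)
    have heq : (fun t => g (x t) *ᵥ u t)
        = fun t => (fun i => ∑ j, (g' (x t)) i j * (u t) j : Fin n → ℝ) := by
      funext t i
      simp [hg'def, Matrix.mulVec, dotProduct]
    rw [heq]
    exact h
  have hFb : ∀ t ∈ Set.Ioc (0:ℝ) tf, ‖g (x t) *ᵥ u t‖ ≤ C := by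
    intro t ht
    have ht' := Set.Ioc_subset_Icc_self ht
    rw [pi_norm_le_iff_of_nonneg hC0]
    intro i
    rw [Real.norm_eq_abs]
    calc |(g (x t) *ᵥ u t) i| = |∑ j, g (x t) i j * u t j| := by
          simp [Matrix.mulVec, dotProduct]
      _ ≤ ∑ j, |g (x t) i j * u t j| := Finset.abs_sum_le_sum_abs _ _
      _ ≤ ∑ j, |g (x t) i j| := Finset.sum_le_sum (fun j _ => by
          rw [abs_mul]
          exact mul_le_of_le_one_right (abs_nonneg _) (hub' t j))
      _ ≤ C := hentry t ht' i
  have hF_II : IntervalIntegrable (fun t => g (x t) *ᵥ u t) volume 0 tf :=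
    intervalIntegrable_of_bound htf.le _ hFm C hFb
  have hf_II : IntervalIntegrable (fun t => f (x t)) volume 0 tf := by
    apply ContinuousOn.intervalIntegrable
    rw [Set.uIcc_of_le htf.le]
    exact hfc.comp_continuousOn hxc
  set MB : (Fin m → ℝ) →L[ℝ] (Fin n → ℝ) :=
    LinearMap.toContinuousLinearMap (Matrix.mulVecLin (g x0)) with hMBdef
  have hMB : ∀ y, MB y = g x0 *ᵥ y := by
    intro y
    simp [hMBdef, Matrix.mulVecLin_apply]
  have hu_II : IntervalIntegrable u volume 0 tf := by
    apply intervalIntegrable_of_bound htf.le u husm 1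
    intro t _
    rw [pi_norm_le_iff_of_nonneg zero_le_one]
    intro i
    rw [Real.norm_eq_abs]
    exact hub' t i
  have hBu_II : IntervalIntegrable (fun t => g x0 *ᵥ u t) volume 0 tf := by
    have h : IntervalIntegrable (fun t => MB (u t)) volume 0 tf := by
      apply intervalIntegrable_of_bound htf.le _
        (MB.continuous.comp_aestronglyMeasurable husm) ‖MB‖
      intro t _
      calc ‖MB (u t)‖ ≤ ‖MB‖ * ‖u t‖ := MB.le_opNorm _
        _ ≤ ‖MB‖ * 1 := by
            apply mul_le_mul_of_nonneg_left _ (norm_nonneg _)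
            rw [pi_norm_le_iff_of_nonneg zero_le_one]
            intro i
            rw [Real.norm_eq_abs]
            exact hub' t i
        _ = ‖MB‖ := mul_one _
    simpa [hMB] using h
  have hsub_II : IntervalIntegrable (fun t => (g (x t) - g x0) *ᵥ u t) volume 0 tf := by
    have h := hF_II.sub hBu_II
    simpa [Matrix.sub_mulVec] using h
  have hD_II : IntervalIntegrable (fun t => f (x t) + g (x t) *ᵥ u t) volume 0 tf :=
    hf_II.add hF_II
  have hFTC : (∫ t in (0:ℝ)..tf, (f (x t) + g (x t) *ᵥ u t)) = xtg - x0 := by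
    rw [intervalIntegral.integral_eq_sub_of_hasDerivAt
      (fun t ht => hx t (by rwa [Set.uIcc_of_le htf.le] at ht)) hD_II, hreach, hx0]
  set w : Fin m → ℝ := ∫ t in (0:ℝ)..tf, u t with hwdef
  have hint_Bu : (∫ t in (0:ℝ)..tf, g x0 *ᵥ u t) = g x0 *ᵥ w := by
    have h := ContinuousLinearMap.intervalIntegral_comp_comm MB hu_II
    calc (∫ t in (0:ℝ)..tf, g x0 *ᵥ u t) = ∫ t in (0:ℝ)..tf, MB (u t) := by
          simp only [hMB]
      _ = MB w := h
      _ = g x0 *ᵥ w := hMB w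
  have hsplit : (∫ t in (0:ℝ)..tf, (f (x t) + g (x t) *ᵥ u t))
      = (∫ t in (0:ℝ)..tf, f (x t))
        + ((∫ t in (0:ℝ)..tf, (g (x t) - g x0) *ᵥ u t) + g x0 *ᵥ w) := by
    rw [intervalIntegral.integral_add hf_II hF_II]
    congr 1
    calc ∫ t in (0:ℝ)..tf, g (x t) *ᵥ u t
        = ∫ t in (0:ℝ)..tf, (((g (x t) - g x0) *ᵥ u t) + g x0 *ᵥ u t) := by
          congr 1
          funext t
          rw [Matrix.sub_mulVec]
          abel
      _ = (∫ t in (0:ℝ)..tf, (g (x t) - g x0) *ᵥ u t)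
            + ∫ t in (0:ℝ)..tf, g x0 *ᵥ u t :=
          intervalIntegral.integral_add hsub_II hBu_II
      _ = _ := by rw [hint_Bu]
  have hkey : g x0 *ᵥ w = v - (x0 - xtg) := by
    rw [hv]
    have h := hsplit.symm.trans hFTC
    linear_combination h
  have hwa : ∀ i, w i = ∫ t in (0:ℝ)..tf, u t i := by
    intro i
    have h := ContinuousLinearMap.intervalIntegral_comp_comm
      (ContinuousLinearMap.proj (R := ℝ) (φ := fun _ : Fin m => ℝ) i) hu_II
    simpa [hwdef] using h.symm
  have hui_II : ∀ i, IntervalIntegrable (fun t => u t i) volume 0 tf := fun i =>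
    intervalIntegrable_of_bound htf.le _
      (((measurable_pi_apply i).comp hu).aestronglyMeasurable.restrict) 1
      (fun t _ => by rw [Real.norm_eq_abs]; exact hub' t i)
  have hui2_II : ∀ i, IntervalIntegrable (fun t => (u t i) ^ 2) volume 0 tf := fun i =>
    intervalIntegrable_of_bound htf.le _
      ((((measurable_pi_apply i).comp hu).pow_const 2).aestronglyMeasurable.restrict) 1
      (fun t _ => by
        rw [Real.norm_eq_abs, abs_pow]
        exact pow_le_one₀ (abs_nonneg _) (hub' t i))
  rw [ge_iff_le]
  calc (1 / tf) * ∑ i, ((pinv (g x0) *ᵥ (v - (x0 - xtg))) i) ^ 2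
      = (1 / tf) * ∑ i, (((pinv (g x0) * g x0) *ᵥ w) i) ^ 2 := by
        rw [← hkey, Matrix.mulVec_mulVec]
    _ ≤ (1 / tf) * ∑ i, (w i) ^ 2 :=
        mul_le_mul_of_nonneg_left (proj_contract _ hB w) (by positivity)
    _ = (1 / tf) * ∑ i, (∫ t in (0:ℝ)..tf, u t i) ^ 2 := by
        simp_rw [hwa]
    _ ≤ (1 / tf) * ∑ i, (tf * ∫ t in (0:ℝ)..tf, (u t i) ^ 2) := by
        apply mul_le_mul_of_nonneg_left _ (by positivity)
        exact Finset.sum_le_sum fun i _ => sq_integral_le htf _ (hui_II i) (hui2_II i)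
    _ = ∑ i, ∫ t in (0:ℝ)..tf, (u t i) ^ 2 := by
        rw [← Finset.mul_sum]
        field_simp
    _ = ∫ t in (0:ℝ)..tf, ∑ i, (u t i) ^ 2 :=
        (intervalIntegral.integral_finset_sum fun i _ => hui2_II i).symm
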